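/- Let n ≥ 1 and let Z_1, …, Z_n be exchangeable real random variables that are almost surely distinct. For any α ∈ (0, 1) with ⌊αn⌋ ≥ 1, P(Z_n > Z_{(⌊αn⌋, n)}) ≤ 1 − α + 1/n, where Z_{(⌊αn⌋, n)} is the ⌊αn⌋-th smallest value among Z_1, …, Z_n. -/

import Mathlib

open MeasureTheory Filter

/-- The `k`-th smallest value (1-indexed) among `v 0, …, v (n-1)`,
counted with multiplicity. -/
noncomputable def kthSmallest {n : ℕ} (v : Fin n → ℝ) (k : ℕ) : ℝ :=
  if h : k - 1 < n then v (Tuple.sort v ⟨k - 1, h⟩) else 0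

/-- Real random variables `Z 0, …, Z (m-1)` are exchangeable if for every
permutation `σ` of the indices, the permuted vector has the same joint law. -/
def Exchangeable {Ω : Type*} [MeasurableSpace Ω] (P : Measure Ω) {m : ℕ}
    (Z : Fin m → Ω → ℝ) : Prop :=
  ∀ σ : Equiv.Perm (Fin m),
    Measure.map (fun ω => fun i => Z (σ i) ω) P = Measure.map (fun ω => fun i => Z i ω) P


/-! Write `k = ⌊α n⌋`. When the `Z i` are distinct, `Z j` exceeds the `k`-th smallest value for
exactly `n - k` indices `j`, and by exchangeability every index does so with the same probability.
So the probability is exactly `1 - k / n`, and `k > α n - 1` gives the bound. -/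

open Finset Function
open scoped ENNReal

section OrderStatistics

variable {n : ℕ}

theorem kthSmallest_comp_perm (v : Fin n → ℝ) (σ : Equiv.Perm (Fin n)) (k : ℕ) :
    kthSmallest (v ∘ σ) k = kthSmallest v k := by
  unfold kthSmallest
  split_ifs
  · exact congrFun (Tuple.comp_perm_comp_sort_eq_comp_sort (f := v) (σ := σ)) _
  · rfl

theorem kthSmallest_lt_iff_le_card {k : ℕ} (hk : 1 ≤ k) (hkn : k ≤ n) (v : Fin n → ℝ)
    (a : ℝ) : kthSmallest v k < a ↔ k ≤ #{i | v i < a} := by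
  have hk' : k - 1 < n := by omega
  have hcard : #{i | (v ∘ Tuple.sort v) i < a} = #{i | v i < a} :=
    card_equiv (Tuple.sort v) (by simp)
  rw [kthSmallest, dif_pos hk', ← comp_apply (f := v),
    ← Tuple.lt_card_lt_iff_apply_lt_of_monotone (Tuple.monotone_sort v), hcard, Fin.val_mk]
  omega

theorem card_kthSmallest_lt_of_injective {k : ℕ} (hk : 1 ≤ k) (hkn : k ≤ n)
    {v : Fin n → ℝ} (hv : Injective v) : #{j | kthSmallest v k < v j} = n - k := by
  have hk' : k - 1 < n := by omega
  set σ := Tuple.sort v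
  have hmono : StrictMono (v ∘ σ) :=
    (Tuple.monotone_sort v).strictMono_of_injective (hv.comp σ.injective)
  have hreindex : #{j | kthSmallest v k < v j} = #(Ioi (⟨k - 1, hk'⟩ : Fin n)) := by
    refine (card_equiv σ fun m => ?_).symm
    simp [kthSmallest, dif_pos hk', σ, ← hmono.lt_iff_lt]
  rw [hreindex, Fin.card_Ioi, Fin.val_mk]
  omega

theorem measurableSet_kthSmallest_lt {k : ℕ} (hk : 1 ≤ k) (hkn : k ≤ n) (j : Fin n) :
    MeasurableSet {v : Fin n → ℝ | kthSmallest v k < v j} := by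
  have hcard : Measurable fun v : Fin n → ℝ => #{i | v i < v j} := by
    simp_rw [card_filter]
    exact Finset.measurable_sum _ fun i _ =>
      Measurable.ite (measurableSet_lt (measurable_pi_apply i) (measurable_pi_apply j))
        measurable_const measurable_const
  simp_rw [kthSmallest_lt_iff_le_card hk hkn]
  exact hcard (MeasurableSet.of_discrete (s := {m : ℕ | k ≤ m}))

end OrderStatistics

section Probability

variable {Ω : Type*} [MeasurableSpace Ω] {P : Measure Ω}

theorem ae_injective_of_measure_eq_zero {ι β : Type*} [Countable ι] {Z : ι → Ω → β}
    (hdist : ∀ i j, i ≠ j → P {ω | Z i ω = Z j ω} = 0) :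
    ∀ᵐ ω ∂P, Injective fun i => Z i ω := by
  have hne : ∀ i j, ∀ᵐ ω ∂P, i ≠ j → Z i ω ≠ Z j ω := fun i j => by
    by_cases hij : i = j
    · simp [hij]
    · filter_upwards [measure_eq_zero_iff_ae_notMem.mp (hdist i j hij)] with ω hω
      exact fun _ => hω
  filter_upwards [ae_all_iff.mpr fun i => ae_all_iff.mpr (hne i)] with ω hω i j
  exact not_imp_not.mp (hω i j)

theorem sum_measure_eq_of_ae_card_eq [IsProbabilityMeasure P] {ι : Type*} [Fintype ι]
    {A : ι → Set Ω} [∀ i, DecidablePred (· ∈ A i)] (hA : ∀ i, MeasurableSet (A i)) {c : ℕ}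
    (hc : ∀ᵐ ω ∂P, #{i | ω ∈ A i} = c) : ∑ i, P (A i) = c := by
  calc ∑ i, P (A i) = ∫⁻ ω, ∑ i, (A i).indicator 1 ω ∂P := by
        rw [lintegral_finsetSum _ fun i _ => measurable_one.indicator (hA i)]
        simp_rw [lintegral_indicator_one (hA _)]
    _ = ∫⁻ _, (c : ℝ≥0∞) ∂P := by
        refine lintegral_congr_ae ?_
        filter_upwards [hc] with ω hω
        simp [Set.indicator_apply, sum_boole, hω]
    _ = c := by simp

variable {n : ℕ} {Z : Fin n → Ω → ℝ}

theorem Exchangeable.measure_preimage_comp_perm (hexch : Exchangeable P Z)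
    (hmeas : ∀ i, Measurable (Z i)) (σ : Equiv.Perm (Fin n)) {S : Set (Fin n → ℝ)}
    (hS : MeasurableSet S) :
    P ((fun ω i => Z (σ i) ω) ⁻¹' S) = P ((fun ω i => Z i ω) ⁻¹' S) := by
  rw [← Measure.map_apply (measurable_pi_lambda _ fun i => hmeas (σ i)) hS, hexch σ,
    Measure.map_apply (measurable_pi_lambda _ hmeas) hS]

theorem Exchangeable.measure_kthSmallest_lt_eq (hexch : Exchangeable P Z)
    (hmeas : ∀ i, Measurable (Z i)) {k : ℕ} (hk : 1 ≤ k) (hkn : k ≤ n) (i j : Fin n) :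
    P {ω | kthSmallest (fun l => Z l ω) k < Z i ω} =
      P {ω | kthSmallest (fun l => Z l ω) k < Z j ω} := by
  have hswap := hexch.measure_preimage_comp_perm hmeas (Equiv.swap i j)
    (measurableSet_kthSmallest_lt hk hkn j)
  refine Eq.trans ?_ hswap
  congr 1
  ext ω
  simp only [Set.mem_preimage, Set.mem_ofPred_eq, Equiv.swap_apply_right]
  exact iff_of_eq (congrArg (· < Z i ω)
    (kthSmallest_comp_perm (fun l => Z l ω) (Equiv.swap i j) k)).symm

theorem Exchangeable.measureReal_kthSmallest_lt [IsProbabilityMeasure P]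
    (hexch : Exchangeable P Z) (hmeas : ∀ i, Measurable (Z i))
    (hdist : ∀ i j, i ≠ j → P {ω | Z i ω = Z j ω} = 0) {k : ℕ} (hk : 1 ≤ k) (hkn : k ≤ n)
    (j : Fin n) : P.real {ω | kthSmallest (fun l => Z l ω) k < Z j ω} = 1 - k / n := by
  have hsum := sum_measure_eq_of_ae_card_eq (P := P)
    (A := fun i => {ω | kthSmallest (fun l => Z l ω) k < Z i ω})
    (fun i => measurable_pi_lambda _ hmeas (measurableSet_kthSmallest_lt hk hkn i)) (c := n - k)
    (by filter_upwards [ae_injective_of_measure_eq_zero hdist] with ω hω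
        exact card_kthSmallest_lt_of_injective hk hkn hω)
  rw [sum_congr rfl fun i _ => hexch.measure_kthSmallest_lt_eq hmeas hk hkn i j, sum_const,
    card_univ, Fintype.card_fin, nsmul_eq_mul] at hsum
  have hreal := congrArg ENNReal.toReal hsum
  rw [ENNReal.toReal_mul, ENNReal.toReal_natCast, ENNReal.toReal_natCast,
    Nat.cast_sub hkn] at hreal
  have hn : (n : ℝ) ≠ 0 := by norm_cast; omega
  rw [measureReal_def]
  field_simp
  linarith

end Probability

theorem floor_quantiles_exchangeability_upper
    {Ω : Type*} [MeasurableSpace Ω] (P : Measure Ω) [IsProbabilityMeasure P]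
    (n : ℕ) (hn : 1 ≤ n) (Z : Fin n → Ω → ℝ) (hmeas : ∀ i, Measurable (Z i))
    (hexch : Exchangeable P Z)
    (hdist : ∀ i j, i ≠ j → P {ω | Z i ω = Z j ω} = 0)
    (α : ℝ) (hα : α ∈ Set.Ioo (0 : ℝ) 1) (hfloor : 1 ≤ ⌊α * (n : ℝ)⌋₊) :
    (P {ω | kthSmallest (fun i => Z i ω) ⌊α * (n : ℝ)⌋₊ <
        Z ⟨n - 1, by omega⟩ ω}).toReal ≤ 1 - α + 1 / n := by
  obtain ⟨-, hα1⟩ := hα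
  have hn' : (0 : ℝ) < n := by exact_mod_cast hn
  have hkn : ⌊α * n⌋₊ ≤ n := Nat.floor_le_of_le (by nlinarith)
  have hk : α * n < ⌊α * n⌋₊ + 1 := Nat.lt_floor_add_one _
  rw [← measureReal_def, hexch.measureReal_kthSmallest_lt hmeas hdist hfloor hkn]
  have : α - 1 / n ≤ ⌊α * n⌋₊ / n := by
    rw [sub_le_iff_le_add, ← add_div, le_div_iff₀ hn']
    linarith
  linarith
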